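/- Let k ≥ 1, let M be a finite set of 2k items, and let w be a Boolean-valued function on subsets of M such that w(A) ≠ w(M\A) whenever |A| = k. Define the valuation v on M by: v(∅) = 0; v(S) = 1 if 0 < |S| < k; v(S) = 2 if k < |S| < 2k; v(M) = 3; and for |S| = k, v(S) = 2 if w(S) is true and v(S) = 1 if w(S) is false. Then v is subadditive. -/

import Mathlib

/-!
Every nonempty bundle is worth at least `1`, so subadditivity can only fail when `S ∪ T` is worth
`3`, i.e. `S ∪ T = M`. Then `|S| + |T| ≥ 2k`: either one of the two has more than `k` items and is
worth `2`, or both have exactly `k` items, hence are complementary halves, and the condition on `w`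
makes their values `1` and `2`.
-/

open Finset

noncomputable def thresholdValuation {ι : Type*} (k : ℕ) (w : Finset ι → Bool) (S : Finset ι) : ℝ :=
  if #S = 0 then 0
  else if #S < k then 1
  else if #S = k then (if w S then 2 else 1)
  else if #S < 2 * k then 2
  else 3

namespace thresholdValuation

variable {ι : Type*} {k : ℕ} {w : Finset ι → Bool} {S : Finset ι}

@[simp]
theorem empty : thresholdValuation k w ∅ = 0 := by
  simp [thresholdValuation]

theorem one_le (hS : S.Nonempty) : 1 ≤ thresholdValuation k w S := by
  have := hS.card_ne_zero
  unfold thresholdValuation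
  split_ifs <;> first | omega | norm_num

theorem two_le (hS : k < #S) : 2 ≤ thresholdValuation k w S := by
  unfold thresholdValuation
  split_ifs <;> first | omega | norm_num

theorem le_two (hS : #S < 2 * k) : thresholdValuation k w S ≤ 2 := by
  unfold thresholdValuation
  split_ifs <;> first | omega | norm_num

theorem le_three : thresholdValuation k w S ≤ 3 := by
  unfold thresholdValuation
  split_ifs <;> norm_num

theorem of_card_eq (hk : 0 < k) (hS : #S = k) :
    thresholdValuation k w S = if w S then 2 else 1 := by
  unfold thresholdValuation
  split_ifs <;> first | omega | rfl

theorem add_of_card_eq_of_ne {S T : Finset ι} (hk : 0 < k) (hS : #S = k) (hT : #T = k)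
    (hw : w S ≠ w T) : thresholdValuation k w S + thresholdValuation k w T = 3 := by
  rw [of_card_eq hk hS, of_card_eq hk hT]
  revert hw
  cases w S <;> cases w T <;> norm_num

variable [DecidableEq ι] {M : Finset ι}

theorem three_le_add_of_union_eq (hM : #M = 2 * k)
    (hw : ∀ A ⊆ M, #A = k → w A ≠ w (M \ A)) {S T : Finset ι} (hS : S.Nonempty)
    (hT : T.Nonempty) (hST : S ∪ T = M) :
    3 ≤ thresholdValuation k w S + thresholdValuation k w T := by
  have hS_one : 1 ≤ thresholdValuation k w S := one_le hS
  have hT_one : 1 ≤ thresholdValuation k w T := one_le hT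
  have hcard : 2 * k ≤ #S + #T := hM ▸ hST ▸ card_union_le S T
  rcases lt_or_ge k #S with hSk | hSk
  · linarith [(two_le hSk : 2 ≤ thresholdValuation k w S)]
  rcases lt_or_ge k #T with hTk | hTk
  · linarith [(two_le hTk : 2 ≤ thresholdValuation k w T)]
  have hSk : #S = k := by omega
  have hTk : #T = k := by omega
  have hSM : S ⊆ M := hST ▸ subset_union_left
  have hT_compl : M \ S = T :=
    eq_of_subset_of_card_le (sdiff_le_iff.mpr hST.ge) (by rw [card_sdiff_of_subset hSM]; omega)
  have hk : 0 < k := hSk ▸ hS.card_pos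
  exact (add_of_card_eq_of_ne hk hSk hTk (hT_compl ▸ hw S hSM hSk)).ge

theorem union_le (hM : #M = 2 * k) (hw : ∀ A ⊆ M, #A = k → w A ≠ w (M \ A))
    {S T : Finset ι} (hS : S ⊆ M) (hT : T ⊆ M) :
    thresholdValuation k w (S ∪ T) ≤ thresholdValuation k w S + thresholdValuation k w T := by
  rcases S.eq_empty_or_nonempty with rfl | hSne
  · simp
  rcases T.eq_empty_or_nonempty with rfl | hTne
  · simp
  by_cases hU : #(S ∪ T) < 2 * k
  · have hU_two : thresholdValuation k w (S ∪ T) ≤ 2 := le_two hU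
    have hS_one : 1 ≤ thresholdValuation k w S := one_le hSne
    have hT_one : 1 ≤ thresholdValuation k w T := one_le hTne
    linarith
  have hST : S ∪ T = M := eq_of_subset_of_card_le (union_subset hS hT) (by omega)
  exact le_three.trans (three_le_add_of_union_eq hM hw hSne hTne hST)

end thresholdValuation

theorem lower_bound_valuation_subadditive_general {ι : Type*} [DecidableEq ι]
    (k : ℕ) (M : Finset ι) (hM : M.card = 2 * k)
    (w : Finset ι → Bool)
    (hw : ∀ A ⊆ M, A.card = k → w A ≠ w (M \ A))
    (v : Finset ι → ℝ)
    (hv : ∀ S ⊆ M, v S =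
      if S.card = 0 then 0
      else if S.card < k then 1
      else if S.card = k then (if w S then 2 else 1)
      else if S.card < 2 * k then 2
      else 3) :
    ∀ S T : Finset ι, S ⊆ M → T ⊆ M → v (S ∪ T) ≤ v S + v T := by
  intro S T hS hT
  rw [hv S hS, hv T hT, hv _ (union_subset hS hT)]
  exact thresholdValuation.union_le hM hw hS hT

/-- The valuation used in the c-EF lower bound for subadditive valuations is
subadditive. -/
theorem lower_bound_valuation_subadditive {ι : Type*} [DecidableEq ι]
    (k : ℕ) (hk : 1 ≤ k) (M : Finset ι) (hM : M.card = 2 * k)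
    (w : Finset ι → Bool)
    (hw : ∀ A ⊆ M, A.card = k → w A ≠ w (M \ A))
    (v : Finset ι → ℝ)
    (hv : ∀ S ⊆ M, v S =
      if S.card = 0 then 0
      else if S.card < k then 1
      else if S.card = k then (if w S then 2 else 1)
      else if S.card < 2 * k then 2
      else 3) :
    ∀ S T : Finset ι, S ⊆ M → T ⊆ M → v (S ∪ T) ≤ v S + v T :=
  lower_bound_valuation_subadditive_general k M hM w hw v hv
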